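/- For |q| < 1 and any complex z, the q-exponential E_q(z) = ∑_{n≥0} q^{n(n-1)/2} z^n/(q;q)_n equals (-z;q)_∞ = ∏_{k≥0}(1 + z q^k). -/

import Mathlib

/-!
`E(z) = ∑ qⁿ⁽ⁿ⁻¹⁾ᐟ² zⁿ / (q;q)ₙ` converges for every `z` and satisfies `E(z) = (1 + z) E(qz)`,
because its coefficients obey `aₙ₊₁ (1 - qⁿ⁺¹) = qⁿ aₙ`. Iterating gives
`E(z) = ∏_{k<N} (1 + z qᵏ) · E(qᴺ z)`, and `E(qᴺ z) → E(0) = 1` by continuity of `E`.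
-/

noncomputable section

/-- The q-Pochhammer symbol (a;q)_m = ∏_{j=0}^{m-1} (1 - a q^j). -/
def qPoch (a q : ℂ) (m : ℕ) : ℂ := ∏ j ∈ Finset.range m, (1 - a * q ^ j)

open Filter Topology Metric

lemma qPoch_succ (a q : ℂ) (n : ℕ) : qPoch a q (n + 1) = qPoch a q n * (1 - a * q ^ n) :=
  Finset.prod_range_succ _ n

lemma one_sub_norm_le_norm_one_sub_mul_pow {a q : ℂ} (hq : ‖q‖ ≤ 1) (n : ℕ) :
    1 - ‖a‖ ≤ ‖1 - a * q ^ n‖ := by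
  have hle : ‖a * q ^ n‖ ≤ ‖a‖ := by
    rw [norm_mul, norm_pow]
    exact mul_le_of_le_one_right (norm_nonneg a) (pow_le_one₀ (norm_nonneg q) hq)
  have h := norm_sub_norm_le (1 : ℂ) (a * q ^ n)
  rw [norm_one] at h
  linarith

lemma one_sub_mul_pow_ne_zero {a q : ℂ} (ha : ‖a‖ < 1) (hq : ‖q‖ ≤ 1) (n : ℕ) :
    1 - a * q ^ n ≠ 0 :=
  norm_pos_iff.mp ((sub_pos.mpr ha).trans_le (one_sub_norm_le_norm_one_sub_mul_pow hq n))

def qExpCoeff (q : ℂ) (n : ℕ) : ℂ := q ^ n.choose 2 / qPoch q q n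

def qExp (q z : ℂ) : ℂ := ∑' n, qExpCoeff q n * z ^ n

lemma qExpCoeff_zero (q : ℂ) : qExpCoeff q 0 = 1 := by simp [qExpCoeff, qPoch]

lemma qExpCoeff_succ (q : ℂ) (n : ℕ) :
    qExpCoeff q (n + 1) = q ^ n * qExpCoeff q n / (1 - q * q ^ n) := by
  rw [qExpCoeff, qExpCoeff, Nat.choose_succ_succ', Nat.choose_one_right, qPoch_succ, pow_add,
    div_mul_eq_div_div]
  ring

lemma qExpCoeff_succ_mul_one_sub {q : ℂ} (hq : ‖q‖ < 1) (n : ℕ) :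
    qExpCoeff q (n + 1) * (1 - q * q ^ n) = q ^ n * qExpCoeff q n := by
  rw [qExpCoeff_succ, div_mul_cancel₀ _ (one_sub_mul_pow_ne_zero hq hq.le n)]

lemma summable_norm_qExpCoeff_mul_pow {q : ℂ} (hq : ‖q‖ < 1) (w : ℂ) :
    Summable fun n => ‖qExpCoeff q n * w ^ n‖ := by
  refine summable_of_ratio_norm_eventually_le one_half_lt_one ?_
  have hgap : 0 < 1 - ‖q‖ := sub_pos.mpr hq
  have hsmall : Tendsto (fun n : ℕ => ‖q‖ ^ n * ‖w‖) atTop (𝓝 0) := by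
    simpa using (tendsto_pow_atTop_nhds_zero_of_lt_one (norm_nonneg q) hq).mul_const ‖w‖
  filter_upwards [hsmall.eventually_le_const (half_pos hgap)] with n hn
  have hden := one_sub_norm_le_norm_one_sub_mul_pow (a := q) hq.le n
  rw [norm_norm, norm_norm, qExpCoeff_succ, pow_succ]
  calc ‖q ^ n * qExpCoeff q n / (1 - q * q ^ n) * (w ^ n * w)‖
      = ‖q‖ ^ n * ‖w‖ / ‖1 - q * q ^ n‖ * ‖qExpCoeff q n * w ^ n‖ := by
        simp only [norm_mul, norm_div, norm_pow]; ring
    _ ≤ 1 / 2 * ‖qExpCoeff q n * w ^ n‖ := by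
        refine mul_le_mul_of_nonneg_right ?_ (norm_nonneg _)
        rw [div_le_iff₀ (hgap.trans_le hden)]
        linarith

lemma summable_qExpCoeff_mul_pow {q : ℂ} (hq : ‖q‖ < 1) (w : ℂ) :
    Summable fun n => qExpCoeff q n * w ^ n :=
  (summable_norm_qExpCoeff_mul_pow hq w).of_norm

lemma qExp_zero (q : ℂ) : qExp q 0 = 1 := by
  rw [qExp, tsum_eq_single 0 fun n hn => by simp [hn], qExpCoeff_zero, pow_zero, mul_one]

lemma continuousOn_qExp_closedBall {q : ℂ} (hq : ‖q‖ < 1) (w : ℂ) :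
    ContinuousOn (qExp q) (closedBall 0 ‖w‖) := by
  refine continuousOn_tsum (fun n => by fun_prop) (summable_norm_qExpCoeff_mul_pow hq w) ?_
  intro n x hx
  rw [mem_closedBall_zero_iff] at hx
  simp only [norm_mul, norm_pow]
  gcongr

lemma continuous_qExp {q : ℂ} (hq : ‖q‖ < 1) : Continuous (qExp q) := by
  refine continuous_iff_continuousAt.mpr fun x => ?_
  have hr : ‖((‖x‖ + 1 : ℝ) : ℂ)‖ = ‖x‖ + 1 := Complex.norm_of_nonneg (by positivity)
  refine (continuousOn_qExp_closedBall hq ((‖x‖ + 1 : ℝ) : ℂ)).continuousAt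
    (closedBall_mem_nhds_of_mem ?_)
  rw [hr, mem_ball_zero_iff]
  linarith

lemma qExp_eq_one_add_mul_qExp_mul {q : ℂ} (hq : ‖q‖ < 1) (w : ℂ) :
    qExp q w = (1 + w) * qExp q (q * w) := by
  have hqw := summable_qExpCoeff_mul_pow hq (q * w)
  have hterm (n : ℕ) : qExpCoeff q (n + 1) * w ^ (n + 1)
      = qExpCoeff q (n + 1) * (q * w) ^ (n + 1) + qExpCoeff q n * (q * w) ^ n * w := by
    linear_combination w ^ (n + 1) * qExpCoeff_succ_mul_one_sub hq n
  rw [qExp, qExp, (summable_qExpCoeff_mul_pow hq w).tsum_eq_zero_add, tsum_congr hterm,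
    ((summable_nat_add_iff 1).mpr hqw).tsum_add (hqw.mul_right w), tsum_mul_right,
    hqw.tsum_eq_zero_add, qExpCoeff_zero]
  ring

lemma qExp_eq_prod_mul_qExp {q : ℂ} (hq : ‖q‖ < 1) (z : ℂ) (N : ℕ) :
    qExp q z = (∏ k ∈ Finset.range N, (1 + z * q ^ k)) * qExp q (q ^ N * z) := by
  induction N with
  | zero => simp
  | succ N ih =>
    rw [ih, qExp_eq_one_add_mul_qExp_mul hq (q ^ N * z), Finset.prod_range_succ, pow_succ']
    ring_nf

/-- For |q| < 1 and any z, E_q(z) = ∑_{n≥0} q^{n(n-1)/2} z^n/(q;q)_n = (-z;q)_∞. -/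
theorem stmt2 (q z : ℂ) (hq : ‖q‖ < 1) :
    ∑' n : ℕ, q ^ (n * (n - 1) / 2) * z ^ n / qPoch q q n
      = ∏' k : ℕ, (1 + z * q ^ k) := by
  have hE : ∑' n : ℕ, q ^ (n * (n - 1) / 2) * z ^ n / qPoch q q n = qExp q z :=
    tsum_congr fun n => by rw [qExpCoeff, Nat.choose_two_right]; ring
  have hmult : Multipliable fun k : ℕ => 1 + z * q ^ k :=
    Complex.multipliable_one_add_of_summable ((summable_geometric_of_norm_lt_one hq).mul_left z)
  have htail : Tendsto (fun N : ℕ => qExp q (q ^ N * z)) atTop (𝓝 1) := by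
    rw [← qExp_zero q]
    refine ((continuous_qExp hq).tendsto 0).comp ?_
    simpa using (tendsto_pow_atTop_nhds_zero_of_norm_lt_one hq).mul_const z
  have hfactor : Tendsto (fun N => (∏ k ∈ Finset.range N, (1 + z * q ^ k)) * qExp q (q ^ N * z))
      atTop (𝓝 (qExp q z)) :=
    tendsto_const_nhds.congr (qExp_eq_prod_mul_qExp hq z)
  rw [hE]
  exact tendsto_nhds_unique hfactor (by simpa using hmult.tendsto_prod_tprod_nat.mul htail)
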